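/- For k ∈ ℕ₀ and l ∈ ℕ with l ≥ 1, there exists a polynomial p such that for all t ∈ [−1,1]: f_{k, k+2l}(t) = (k+2)·f_{k+2, k+2l}(t) − t·f_{k+1, k+2l−1}(t) + p(t). Moreover, f_{k, k+2l+1} is identically zero for all k, l ∈ ℕ₀. -/

import Mathlib

open MeasureTheory ProbabilityTheory Filter Set

noncomputable section

/-- The standard Gaussian measure `N(0,1)` on `ℝ`. -/
def stdGaussian : Measure ℝ := gaussianReal 0 1

/-- The `n`-th normalized probabilists' Hermite polynomial as a function `ℝ → ℝ`. -/
def hermiteFun (n : ℕ) (x : ℝ) : ℝ :=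
  (Polynomial.aeval x (Polynomial.hermite n)) / Real.sqrt (n.factorial)

/-- The `n`-th Hermite coefficient `a_n(f) = ∫ f · h_n dγ`. -/
def hermiteCoeff (f : ℝ → ℝ) (n : ℕ) : ℝ :=
  ∫ x, f x * hermiteFun n x ∂stdGaussian

/-- The reference activation `s_k(x) = sgn(x) x^k / (2 k!)`. -/
def refAct (k : ℕ) (x : ℝ) : ℝ := Real.sign x * x ^ k / (2 * k.factorial)

/-- The mix term `f_{i,j}(t) = Σ_n a_n(s_i) a_n(s_j) t^n`. -/
def mixTerm (i j : ℕ) (t : ℝ) : ℝ :=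
  ∑' n : ℕ, hermiteCoeff (refAct i) n * hermiteCoeff (refAct j) n * t ^ n

/-!
Write `φ` for the standard Gaussian density and `J(k, n) = ∫₀^∞ xᵏ Heₙ(x) φ(x) dx`.
Since `s_k` has parity `(-1)^(k+1)` and `Heₙ` has parity `(-1)^n`,
`a_n(s_k) = (1 - (-1)^(k+n)) J(k, n) / (2 k! √n!)`; in particular `a_n(s_k) = 0` when `k + n`
is even, which is the second claim.

Integration by parts with `(Heₙ φ)' = -Heₙ₊₁ φ` gives `J(k+1, n+1) = (k+1) J(k, n)`, and the
recurrence `x Heₙ₊₁ = Heₙ₊₂ + (n+1) Heₙ` gives `J(k+1, n+1) = J(k, n+2) + (n+1) J(k, n)`.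
For the coefficients this means `√(n+1) a_{n+1}(s_{j+1}) = a_n(s_j)` and
`a_{n+1}(s_k) = (k+2) a_{n+1}(s_{k+2}) - √(n+1) a_n(s_{k+1})` for every `n`, so both sides of
the recursion have the same Taylor coefficients from degree one on and `p` is a constant.

Convergence on `[-1, 1]`: `J(0, n+2) = -n J(0, n)` gives `J(0, n+1)² ≤ n! φ(0)²`, hence
`a_{n+1}(s_0)² ≤ φ(0)² / (n+1)`, and then `a(s_j)` is square-summable for every `j ≥ 1`.
-/

open Polynomial
open scoped Nat

namespace Polynomial

theorem derivative_hermite_succ (n : ℕ) :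
    derivative (hermite (n + 1)) = (n + 1 : ℤ[X]) * hermite n := by
  induction n with
  | zero => simp
  | succ n ih =>
    rw [hermite_succ (n + 1), derivative_sub, derivative_mul, derivative_X, ih, hermite_succ n]
    simp only [derivative_mul, derivative_natCast, derivative_add, derivative_one]
    push_cast
    ring

theorem X_mul_hermite_succ (n : ℕ) :
    X * hermite (n + 1) = hermite (n + 2) + (n + 1 : ℤ[X]) * hermite n := by
  rw [hermite_succ (n + 1), derivative_hermite_succ]
  ring

theorem hermite_comp_neg_X (n : ℕ) : (hermite n).comp (-X) = (-1) ^ n * hermite n := by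
  induction n with
  | zero => simp
  | succ n ih =>
    have hD : (derivative (hermite n)).comp (-X) = -((-1) ^ n * derivative (hermite n)) := by
      have := derivative_comp (hermite n) (-X)
      rw [ih] at this
      simp only [derivative_neg, derivative_X, derivative_mul, derivative_pow, derivative_one,
        neg_zero, mul_zero] at this
      linear_combination this
    rw [hermite_succ, sub_comp, mul_comp, X_comp, ih, hD]
    ring

theorem aeval_neg_hermite (n : ℕ) (x : ℝ) :
    aeval (-x) (hermite n) = (-1) ^ n * aeval x (hermite n) := by
  have := congrArg (aeval x) (hermite_comp_neg_X n)
  simpa [aeval_comp] using this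

end Polynomial

theorem gaussianPDFReal_zero_one :
    gaussianPDFReal 0 1 = fun x => (√(2 * Real.pi))⁻¹ * Real.exp (-(x ^ 2 / 2)) := by
  ext x
  simp [gaussianPDFReal, neg_div]

theorem hasDerivAt_gaussianPDFReal_zero_one (x : ℝ) :
    HasDerivAt (gaussianPDFReal 0 1) (-x * gaussianPDFReal 0 1 x) x := by
  rw [gaussianPDFReal_zero_one]
  refine (((hasDerivAt_pow 2 x).div_const 2).fun_neg.exp.const_mul
    (√(2 * Real.pi))⁻¹).congr_deriv ?_
  push_cast
  ring

theorem gaussianPDFReal_zero_one_neg (x : ℝ) :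
    gaussianPDFReal 0 1 (-x) = gaussianPDFReal 0 1 x := by
  simp [gaussianPDFReal_zero_one]

theorem integrable_pow_mul_gaussianPDFReal (n : ℕ) :
    Integrable (fun x => x ^ n * gaussianPDFReal 0 1 x) := by
  have := (integrable_rpow_mul_exp_neg_mul_sq (b := 1 / 2) (by norm_num) (s := n)
    (by linarith [(n.cast_nonneg : (0 : ℝ) ≤ n)])).const_mul (√(2 * Real.pi))⁻¹
  refine this.congr (ae_of_all _ fun x => ?_)
  simp only [gaussianPDFReal_zero_one, Real.rpow_natCast]
  rw [neg_mul, one_div_mul_eq_div]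
  ring

theorem integrable_aeval_mul_gaussianPDFReal (p : ℤ[X]) :
    Integrable (fun x => aeval x p * gaussianPDFReal 0 1 x) := by
  induction p using Polynomial.induction_on' with
  | add p q hp hq => simpa only [map_add, add_mul] using hp.fun_add hq
  | monomial n a =>
    simpa [mul_assoc] using (integrable_pow_mul_gaussianPDFReal n).const_mul (a : ℝ)

theorem integral_Ioi_of_hasDerivAt_of_integrableOn {E : Type*} [NormedAddCommGroup E]
    [NormedSpace ℝ E] [CompleteSpace E] {f f' : ℝ → E} {a : ℝ}
    (hderiv : ∀ x ∈ Ici a, HasDerivAt f (f' x) x) (hf : IntegrableOn f (Ioi a))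
    (hf' : IntegrableOn f' (Ioi a)) :
    ∫ x in Ioi a, f' x = -f a := by
  have hlim := tendsto_zero_of_hasDerivAt_of_integrableOn_Ioi
    (fun x hx => hderiv x (Ioi_subset_Ici_self hx)) hf' hf
  rw [integral_Ioi_of_hasDerivAt_of_tendsto' hderiv hf' hlim, zero_sub]

theorem hasDerivAt_aeval_hermite_mul_gaussianPDFReal (n : ℕ) (x : ℝ) :
    HasDerivAt (fun y => aeval y (hermite n) * gaussianPDFReal 0 1 y)
      (-(aeval x (hermite (n + 1)) * gaussianPDFReal 0 1 x)) x := by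
  refine ((hermite n).hasDerivAt_aeval x |>.mul
    (hasDerivAt_gaussianPDFReal_zero_one x)).congr_deriv ?_
  rw [hermite_succ, map_sub, map_mul, aeval_X]
  ring

theorem integrable_pow_mul_aeval_hermite_mul_gaussianPDFReal (k n : ℕ) :
    Integrable (fun x => x ^ k * (aeval x (hermite n) * gaussianPDFReal 0 1 x)) := by
  refine (integrable_aeval_mul_gaussianPDFReal (X ^ k * hermite n)).congr
    (ae_of_all _ fun x => ?_)
  simp [mul_assoc]

def hermiteHalfMoment (k n : ℕ) : ℝ :=
  ∫ x in Ioi 0, x ^ k * (aeval x (hermite n) * gaussianPDFReal 0 1 x)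

theorem hermiteHalfMoment_zero_succ (n : ℕ) :
    hermiteHalfMoment 0 (n + 1) = aeval 0 (hermite n) * gaussianPDFReal 0 1 0 := by
  have hint := integrable_pow_mul_aeval_hermite_mul_gaussianPDFReal
  have h := integral_Ioi_of_hasDerivAt_of_integrableOn (a := 0)
    (fun x _ => hasDerivAt_aeval_hermite_mul_gaussianPDFReal n x)
    (by simpa only [pow_zero, one_mul] using (hint 0 n).integrableOn)
    (by simpa only [pow_zero, one_mul] using (hint 0 (n + 1)).fun_neg.integrableOn)
  rw [integral_neg, neg_inj] at h
  simpa [hermiteHalfMoment] using h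

theorem hermiteHalfMoment_succ_succ (k n : ℕ) :
    hermiteHalfMoment (k + 1) (n + 1) = (k + 1) * hermiteHalfMoment k n := by
  have hint := integrable_pow_mul_aeval_hermite_mul_gaussianPDFReal
  have h := integral_Ioi_of_hasDerivAt_of_integrableOn (a := 0)
    (f' := fun x => (k + 1) * (x ^ k * (aeval x (hermite n) * gaussianPDFReal 0 1 x))
      - x ^ (k + 1) * (aeval x (hermite (n + 1)) * gaussianPDFReal 0 1 x))
    (fun x _ => ((hasDerivAt_pow (k + 1) x).fun_mul
      (hasDerivAt_aeval_hermite_mul_gaussianPDFReal n x)).congr_deriv (by push_cast; ring))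
    (hint (k + 1) n).integrableOn
    (((hint k n).const_mul (k + 1)).sub (hint (k + 1) (n + 1))).integrableOn
  rw [integral_sub ((hint k n).const_mul _).integrableOn (hint (k + 1) (n + 1)).integrableOn,
    integral_const_mul] at h
  simp only [ne_eq, Nat.add_one_ne_zero, not_false_eq_true, zero_pow, zero_mul, neg_zero] at h
  rw [hermiteHalfMoment, hermiteHalfMoment]
  linarith

theorem hermiteHalfMoment_succ_succ_eq_add (k n : ℕ) :
    hermiteHalfMoment (k + 1) (n + 1)
      = hermiteHalfMoment k (n + 2) + (n + 1) * hermiteHalfMoment k n := by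
  have hint := integrable_pow_mul_aeval_hermite_mul_gaussianPDFReal
  have h : ∀ x : ℝ, x ^ (k + 1) * (aeval x (hermite (n + 1)) * gaussianPDFReal 0 1 x)
      = x ^ k * (aeval x (hermite (n + 2)) * gaussianPDFReal 0 1 x)
        + (n + 1) * (x ^ k * (aeval x (hermite n) * gaussianPDFReal 0 1 x)) := by
    intro x
    have := congrArg (aeval x) (X_mul_hermite_succ n)
    simp only [map_mul, map_add, aeval_X, map_natCast, map_one] at this
    linear_combination x ^ k * gaussianPDFReal 0 1 x * this
  simp only [hermiteHalfMoment, h]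
  rw [integral_add (hint k (n + 2)).integrableOn ((hint k n).integrableOn.const_mul _),
    integral_const_mul]

theorem Real.measurable_sign : Measurable Real.sign :=
  Measurable.ite measurableSet_Iio measurable_const
    (Measurable.ite measurableSet_Ioi measurable_const measurable_const)

theorem integral_sign_mul {F : ℝ → ℝ} (hF : Integrable F) :
    ∫ x, Real.sign x * F x = ∫ x in Ioi 0, (F x - F (-x)) := by
  have hG : Integrable (fun x => Real.sign x * F x) :=
    hF.bdd_mul (c := 1) Real.measurable_sign.aestronglyMeasurable (ae_of_all _ fun x => by
      rcases Real.sign_apply_eq x with h | h | h <;> simp [h])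
  have hneg : ∫ x in Iic 0, Real.sign x * F x = -∫ x in Ioi 0, F (-x) := by
    rw [← integral_neg]
    have := integral_comp_neg_Iic (0 : ℝ) (fun x => Real.sign (-x) * F (-x))
    simp only [neg_neg, neg_zero] at this
    rw [this]
    refine setIntegral_congr_fun measurableSet_Ioi fun x hx => ?_
    simp [Real.sign_neg, Real.sign_of_pos hx]
  have hpos : ∫ x in Ioi 0, Real.sign x * F x = ∫ x in Ioi 0, F x :=
    setIntegral_congr_fun measurableSet_Ioi fun x hx => by simp [Real.sign_of_pos hx]
  rw [← intervalIntegral.integral_Iic_add_Ioi hG.integrableOn hG.integrableOn, hneg, hpos,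
    integral_sub hF.integrableOn hF.comp_neg.integrableOn]
  ring

theorem hermiteCoeff_refAct (k n : ℕ) :
    hermiteCoeff (refAct k) n
      = (1 - (-1) ^ (k + n)) * hermiteHalfMoment k n / (2 * k ! * √(n ! : ℝ)) := by
  have hint := integrable_pow_mul_aeval_hermite_mul_gaussianPDFReal k n
  have hparity : ∀ x : ℝ, (-x) ^ k * (aeval (-x) (hermite n) * gaussianPDFReal 0 1 (-x))
      = (-1) ^ (k + n) * (x ^ k * (aeval x (hermite n) * gaussianPDFReal 0 1 x)) := by
    intro x
    rw [neg_pow, aeval_neg_hermite, gaussianPDFReal_zero_one_neg, pow_add]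
    ring
  calc hermiteCoeff (refAct k) n
      = (∫ x, Real.sign x * (x ^ k * (aeval x (hermite n) * gaussianPDFReal 0 1 x)))
          / (2 * k ! * √(n ! : ℝ)) := by
        rw [hermiteCoeff, _root_.stdGaussian, integral_gaussianReal_eq_integral_smul one_ne_zero,
          ← integral_div]
        congr 1 with x
        simp only [refAct, hermiteFun, smul_eq_mul]
        ring
    _ = _ := by
        rw [integral_sign_mul hint]
        simp only [hparity]
        rw [hermiteHalfMoment, ← integral_const_mul]
        congr 1
        refine integral_congr_ae (ae_of_all _ fun x => ?_)
        ring

theorem sqrt_factorial_succ (n : ℕ) : √((n + 1)! : ℝ) = √(n + 1 : ℝ) * √(n ! : ℝ) := by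
  rw [Nat.factorial_succ, Nat.cast_mul, Real.sqrt_mul (by positivity)]
  push_cast
  ring

theorem sqrt_mul_hermiteCoeff_refAct_succ_succ (j n : ℕ) :
    √(n + 1 : ℝ) * hermiteCoeff (refAct (j + 1)) (n + 1) = hermiteCoeff (refAct j) n := by
  rw [hermiteCoeff_refAct, hermiteCoeff_refAct, hermiteHalfMoment_succ_succ, sqrt_factorial_succ,
    Nat.factorial_succ, show j + 1 + (n + 1) = j + n + 2 by ring, pow_add _ (j + n)]
  have : √(n + 1 : ℝ) ≠ 0 := by positivity
  push_cast
  field_simp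

theorem hermiteCoeff_refAct_succ (k n : ℕ) :
    hermiteCoeff (refAct k) (n + 1)
      = (k + 2) * hermiteCoeff (refAct (k + 2)) (n + 1)
        - √(n + 1 : ℝ) * hermiteCoeff (refAct (k + 1)) n := by
  have hJ : ((k : ℝ) + 1) * hermiteHalfMoment k (n + 1)
      = hermiteHalfMoment (k + 2) (n + 1) - (n + 1) * hermiteHalfMoment (k + 1) n := by
    rw [← hermiteHalfMoment_succ_succ, hermiteHalfMoment_succ_succ_eq_add (k + 1) n]
    ring
  rw [hermiteCoeff_refAct, hermiteCoeff_refAct, hermiteCoeff_refAct, sqrt_factorial_succ,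
    Nat.factorial_succ (k + 1), Nat.factorial_succ k,
    show k + 2 + (n + 1) = k + (n + 1) + 2 by ring, show k + 1 + n = k + (n + 1) by ring,
    pow_add _ (k + (n + 1))]
  have h1 : √(n + 1 : ℝ) ≠ 0 := by positivity
  have h2 : √(n + 1 : ℝ) ^ 2 = n + 1 := Real.sq_sqrt (by positivity)
  push_cast
  field_simp
  rw [h2]
  linear_combination (1 - (-1 : ℝ) ^ (k + (n + 1))) * (k + 2) * hJ

theorem hermiteHalfMoment_zero_add_two (n : ℕ) :
    hermiteHalfMoment 0 (n + 2) = -n * hermiteHalfMoment 0 n := by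
  have h := hermiteHalfMoment_succ_succ_eq_add 0 n
  rw [hermiteHalfMoment_succ_succ] at h
  push_cast at h
  linarith

theorem sq_hermiteHalfMoment_zero_succ_le (n : ℕ) :
    hermiteHalfMoment 0 (n + 1) ^ 2 ≤ n ! * gaussianPDFReal 0 1 0 ^ 2 := by
  induction n using Nat.twoStepInduction with
  | zero => simp [hermiteHalfMoment_zero_succ]
  | one => simpa [hermiteHalfMoment_zero_succ] using sq_nonneg _
  | more n ih _ =>
    rw [hermiteHalfMoment_zero_add_two, mul_pow, Nat.factorial_succ, Nat.factorial_succ]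
    push_cast
    have : 0 ≤ (n ! : ℝ) * gaussianPDFReal 0 1 0 ^ 2 := by positivity
    nlinarith

theorem sq_hermiteCoeff_refAct_zero_succ_le (n : ℕ) :
    hermiteCoeff (refAct 0) (n + 1) ^ 2 ≤ gaussianPDFReal 0 1 0 ^ 2 / (n + 1) := by
  have hε : (1 - (-1 : ℝ) ^ (0 + (n + 1))) ^ 2 ≤ 4 := by
    rcases neg_one_pow_eq_or ℝ (0 + (n + 1)) with h | h <;> rw [h] <;> norm_num
  have hJ := sq_hermiteHalfMoment_zero_succ_le n
  have hfac : ((n + 1)! : ℝ) = (n + 1) * n ! := by push_cast [Nat.factorial_succ]; ring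
  rw [hermiteCoeff_refAct, div_pow, mul_pow, mul_pow, Real.sq_sqrt (by positivity), hfac,
    div_le_div_iff₀ (by positivity) (by positivity)]
  simp only [Nat.factorial_zero, Nat.cast_one]
  have : 0 ≤ hermiteHalfMoment 0 (n + 1) ^ 2 := sq_nonneg _
  nlinarith [mul_le_mul hε hJ this (by norm_num)]

theorem sq_hermiteCoeff_refAct_succ_succ (j n : ℕ) :
    (n + 1) * hermiteCoeff (refAct (j + 1)) (n + 1) ^ 2 = hermiteCoeff (refAct j) n ^ 2 := by
  rw [← sqrt_mul_hermiteCoeff_refAct_succ_succ j n, mul_pow, Real.sq_sqrt (by positivity)]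

theorem summable_sq_hermiteCoeff_refAct {j : ℕ} (hj : 1 ≤ j) :
    Summable fun n => hermiteCoeff (refAct j) n ^ 2 := by
  induction j, hj using Nat.le_induction with
  | base =>
    refine (summable_nat_add_iff 2).mp ?_
    have hbound : ∀ n : ℕ, hermiteCoeff (refAct 1) (n + 2) ^ 2
        ≤ gaussianPDFReal 0 1 0 ^ 2 * (1 / ((n + 1 : ℕ) : ℝ) ^ 2) := by
      intro n
      have h := sq_hermiteCoeff_refAct_succ_succ 0 (n + 1)
      have h0 := sq_hermiteCoeff_refAct_zero_succ_le n
      rw [← h, le_div_iff₀ (by positivity)] at h0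
      push_cast at h0 ⊢
      rw [mul_one_div, le_div_iff₀ (by positivity)]
      nlinarith [sq_nonneg (hermiteCoeff (refAct 1) (n + 2))]
    refine Summable.of_nonneg_of_le (fun _ => sq_nonneg _) hbound (Summable.mul_left _ ?_)
    exact (summable_nat_add_iff 1).mpr (Real.summable_one_div_nat_pow.mpr one_lt_two)
  | succ j _ ih =>
    refine (summable_nat_add_iff 1).mp (Summable.of_nonneg_of_le (fun _ => sq_nonneg _)
      (fun n => ?_) ih)
    rw [← sq_hermiteCoeff_refAct_succ_succ j n]
    nlinarith [sq_nonneg (hermiteCoeff (refAct (j + 1)) (n + 1)), (n.cast_nonneg : (0 : ℝ) ≤ n)]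

theorem summable_mul_mul_pow_of_summable_sq {a b : ℕ → ℝ} (ha : Summable fun n => a n ^ 2)
    (hb : Summable fun n => b n ^ 2) {t : ℝ} (ht : |t| ≤ 1) :
    Summable fun n => a n * b n * t ^ n := by
  refine Summable.of_norm_bounded ((ha.add hb).div_const 2) fun n => ?_
  have htn : |t| ^ n ≤ 1 := pow_le_one₀ (abs_nonneg t) ht
  have hab := two_mul_le_add_sq |a n| |b n|
  rw [sq_abs, sq_abs] at hab
  rw [Real.norm_eq_abs, abs_mul, abs_mul, abs_pow]
  nlinarith [mul_nonneg (abs_nonneg (a n)) (abs_nonneg (b n)), abs_nonneg t]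

theorem summable_hermiteCoeff_refAct_mul_mul_pow {i j : ℕ} (hi : 1 ≤ i) (hj : 1 ≤ j) {t : ℝ}
    (ht : |t| ≤ 1) :
    Summable fun n => hermiteCoeff (refAct i) n * hermiteCoeff (refAct j) n * t ^ n :=
  summable_mul_mul_pow_of_summable_sq (summable_sq_hermiteCoeff_refAct hi)
    (summable_sq_hermiteCoeff_refAct hj) ht

theorem hermiteCoeff_refAct_mul_succ (k j n : ℕ) :
    hermiteCoeff (refAct k) (n + 1) * hermiteCoeff (refAct (j + 1)) (n + 1)
      = (k + 2) * (hermiteCoeff (refAct (k + 2)) (n + 1) * hermiteCoeff (refAct (j + 1)) (n + 1))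
        - hermiteCoeff (refAct (k + 1)) n * hermiteCoeff (refAct j) n := by
  rw [hermiteCoeff_refAct_succ, ← sqrt_mul_hermiteCoeff_refAct_succ_succ j n]
  ring

theorem hermiteCoeff_refAct_eq_zero_of_even {k n : ℕ} (h : Even (k + n)) :
    hermiteCoeff (refAct k) n = 0 := by
  rw [hermiteCoeff_refAct, h.neg_one_pow, sub_self, zero_mul, zero_div]

theorem tsum_mul_pow_eq_of_coeff_succ {A B C : ℕ → ℝ} {β t : ℝ}
    (hrec : ∀ n, A (n + 1) = β * B (n + 1) - C n)
    (hB : Summable fun n => B n * t ^ n) (hC : Summable fun n => C n * t ^ n) :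
    ∑' n, A n * t ^ n
      = β * ∑' n, B n * t ^ n - t * ∑' n, C n * t ^ n + (A 0 - β * B 0) := by
  have hB' := ((hasSum_nat_add_iff' 1).mpr hB.hasSum).mul_left β
  simp only [Finset.sum_range_one, pow_zero, mul_one] at hB'
  have hshift : HasSum (fun n => A (n + 1) * t ^ (n + 1))
      (β * (∑' n, B n * t ^ n - B 0) - t * ∑' n, C n * t ^ n) := by
    refine ((hB'.sub (hC.hasSum.mul_left t))).congr_fun fun n => ?_
    rw [hrec, pow_succ]
    ring
  have hA : HasSum (fun n => A n * t ^ n)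
      (β * (∑' n, B n * t ^ n - B 0) - t * ∑' n, C n * t ^ n + A 0) := by
    refine (hasSum_nat_add_iff' 1).mp ?_
    simpa only [Finset.sum_range_one, pow_zero, mul_one, add_sub_cancel_right] using hshift
  rw [hA.tsum_eq]
  ring

theorem mixTerm_recursion :
    (∀ k l : ℕ, 1 ≤ l → ∃ p : Polynomial ℝ, ∀ t ∈ Set.Icc (-1 : ℝ) 1,
      mixTerm k (k + 2 * l) t
        = ((k : ℝ) + 2) * mixTerm (k + 2) (k + 2 * l) t
          - t * mixTerm (k + 1) (k + 2 * l - 1) t + p.eval t) ∧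
    (∀ k l : ℕ, ∀ t ∈ Set.Icc (-1 : ℝ) 1, mixTerm k (k + 2 * l + 1) t = 0) := by
  refine ⟨fun k l hl => ?_, fun k l t _ => ?_⟩
  · obtain ⟨j, hj⟩ : ∃ j, k + 2 * l = j + 1 := ⟨k + 2 * l - 1, by omega⟩
    rw [hj, Nat.add_sub_cancel]
    refine ⟨C (hermiteCoeff (refAct k) 0 * hermiteCoeff (refAct (j + 1)) 0
      - (k + 2) * (hermiteCoeff (refAct (k + 2)) 0 * hermiteCoeff (refAct (j + 1)) 0)),
      fun t ht => ?_⟩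
    rw [eval_C]
    exact tsum_mul_pow_eq_of_coeff_succ (hermiteCoeff_refAct_mul_succ k j)
      (summable_hermiteCoeff_refAct_mul_mul_pow (by omega) (by omega) (abs_le.mpr ht))
      (summable_hermiteCoeff_refAct_mul_mul_pow (by omega) (by omega) (abs_le.mpr ht))
  · refine (tsum_congr fun n => ?_).trans tsum_zero
    rcases Nat.even_or_odd (k + n) with h | ⟨m, hm⟩
    · rw [hermiteCoeff_refAct_eq_zero_of_even h, zero_mul, zero_mul]
    · rw [hermiteCoeff_refAct_eq_zero_of_even (k := k + 2 * l + 1) ⟨m + l + 1, by omega⟩,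
        mul_zero, zero_mul]
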